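/- Subadditivity together with invariance under local unitaries gives the one-round QPIR communication bound: if ρ* is a state on A ⊗ T that is an equal mixture of d pairwise orthogonal states, then log|A| + log|T| ≥ H(ρ*) ≥ log d. -/

import Mathlib

/-!
Write `σ` for the uniform mixture and `q` for its spectrum, a probability vector of length
`|A| |T|`. Concavity of `x ↦ -x log x` gives `H(σ) ≤ log (|A| |T|)`. For the lower bound,
orthogonality kills the cross terms of `tr σ² = d⁻² ∑ₛₜ tr ρₛρₜ`, so the purity `∑ qᵢ² = tr σ²`
is at most `d⁻¹`; and Shannon entropy dominates collision entropy, `-log ∑ qᵢ² ≤ H(q)`, by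
`log x ≤ x - 1` applied to `x = qᵢ / ∑ⱼ qⱼ²` and averaged against `q`.
-/

open Matrix
open scoped ComplexOrder

/-- von Neumann entropy of a (Hermitian) matrix, via its eigenvalues. -/
noncomputable def vNEntropy {n : Type*} [Fintype n] [DecidableEq n]
    (ρ : Matrix n n ℂ) : ℝ :=
  if h : ρ.IsHermitian then ∑ i, Real.negMulLog (h.eigenvalues i) else 0

theorem Matrix.IsHermitian.trace_mul_self_eq_sum_eigenvalues_sq {𝕜 n : Type*} [RCLike 𝕜]
    [Fintype n] [DecidableEq n] {A : Matrix n n 𝕜} (hA : A.IsHermitian) :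
    (A * A).trace = ((∑ i, hA.eigenvalues i ^ 2 : ℝ) : 𝕜) := by
  conv_lhs => rw [hA.spectral_theorem, ← map_mul, Unitary.conjStarAlgAut_apply, trace_mul_cycle,
    Unitary.coe_star_mul_self, one_mul, diagonal_mul_diagonal, trace_diagonal]
  simp [sq]

theorem Matrix.trace_sum_mul_sum_of_trace_mul_eq_zero {ι n R : Type*} [Fintype ι] [Fintype n]
    [NonUnitalNonAssocSemiring R] (ρ : ι → Matrix n n R)
    (horth : ∀ s t, s ≠ t → (ρ s * ρ t).trace = 0) :
    ((∑ s, ρ s) * ∑ s, ρ s).trace = ∑ s, (ρ s * ρ s).trace := by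
  rw [Finset.sum_mul_sum, trace_sum]
  refine Finset.sum_congr rfl fun s _ => ?_
  rw [trace_sum, Finset.sum_eq_single s (fun t _ hts => horth s t hts.symm) (by simp)]

namespace Real

variable {ι : Type*} [Fintype ι] {p : ι → ℝ}

theorem sum_negMulLog_le_log_card (h0 : ∀ i, 0 ≤ p i) (h1 : ∑ i, p i = 1) :
    ∑ i, negMulLog (p i) ≤ log (Fintype.card ι) := by
  have hN : (0 : ℝ) < Fintype.card ι := by
    have : Nonempty ι := by
      by_contra h
      simp [not_nonempty_iff.mp h] at h1
    exact_mod_cast Fintype.card_pos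
  have hJensen := concaveOn_negMulLog.le_map_sum (t := Finset.univ)
    (w := fun _ => (Fintype.card ι : ℝ)⁻¹) (p := p) (fun _ _ => by positivity)
    (by simp [hN.ne']) (fun i _ => h0 i)
  simp only [smul_eq_mul, ← Finset.mul_sum, h1, mul_one] at hJensen
  rw [negMulLog, log_inv, neg_mul_neg] at hJensen
  exact le_of_mul_le_mul_left hJensen (inv_pos.2 hN)

theorem log_le_sum_negMulLog_of_sum_sq_le_inv {c : ℝ} (h0 : ∀ i, 0 ≤ p i) (h1 : ∑ i, p i = 1)
    (hc : ∑ i, p i ^ 2 ≤ c⁻¹) :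
    log c ≤ ∑ i, negMulLog (p i) := by
  set S := ∑ i, p i ^ 2
  have hS : 0 < S := by
    obtain ⟨i, -, hi⟩ := Finset.exists_ne_zero_of_sum_ne_zero (h1.trans_ne one_ne_zero)
    exact Finset.sum_pos' (fun i _ => sq_nonneg (p i)) ⟨i, Finset.mem_univ i, by positivity⟩
  have hterm : ∀ i, p i * (log (p i) - log S) ≤ p i * (p i / S - 1) := fun i => by
    rcases (h0 i).eq_or_lt with hi | hi
    · simp [← hi]
    · rw [← log_div hi.ne' hS.ne']
      exact mul_le_mul_of_nonneg_left (log_le_sub_one_of_pos (by positivity)) hi.le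
  have hsum := Finset.sum_le_sum fun i (_ : i ∈ Finset.univ) => hterm i
  simp only [mul_sub, mul_one, Finset.sum_sub_distrib, ← Finset.sum_mul, h1, one_mul,
    mul_div_assoc', ← sq] at hsum
  rw [← Finset.sum_div, div_self hS.ne'] at hsum
  have hlog : log S ≤ -log c := by
    rw [← log_inv]; exact log_le_log hS hc
  simp only [negMulLog, neg_mul, Finset.sum_neg_distrib]
  linarith

end Real

section Entropy

variable {n : Type*} [Fintype n] [DecidableEq n] {σ : Matrix n n ℂ}

theorem vNEntropy_eq_sum_negMulLog_eigenvalues (hσ : σ.IsHermitian) :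
    vNEntropy σ = ∑ i, Real.negMulLog (hσ.eigenvalues i) :=
  dif_pos hσ

theorem Matrix.PosSemidef.sum_eigenvalues_eq_one (hσ : σ.PosSemidef) (htr : σ.trace = 1) :
    ∑ i, hσ.1.eigenvalues i = 1 := by
  have := hσ.1.trace_eq_sum_eigenvalues
  rw [htr, ← RCLike.ofReal_sum, ← RCLike.ofReal_one, RCLike.ofReal_inj] at this
  exact this.symm

theorem vNEntropy_le_log_card (hσ : σ.PosSemidef) (htr : σ.trace = 1) :
    vNEntropy σ ≤ Real.log (Fintype.card n) := by
  rw [vNEntropy_eq_sum_negMulLog_eigenvalues hσ.1]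
  exact Real.sum_negMulLog_le_log_card hσ.eigenvalues_nonneg (hσ.sum_eigenvalues_eq_one htr)

theorem log_le_vNEntropy_of_re_trace_mul_self_le_inv {c : ℝ} (hσ : σ.PosSemidef)
    (htr : σ.trace = 1) (hc : (σ * σ).trace.re ≤ c⁻¹) :
    Real.log c ≤ vNEntropy σ := by
  rw [vNEntropy_eq_sum_negMulLog_eigenvalues hσ.1]
  refine Real.log_le_sum_negMulLog_of_sum_sq_le_inv hσ.eigenvalues_nonneg
    (hσ.sum_eigenvalues_eq_one htr) ?_
  rwa [hσ.1.trace_mul_self_eq_sum_eigenvalues_sq, ← RCLike.re_to_complex, RCLike.ofReal_re] at hc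

theorem Matrix.PosSemidef.re_trace_mul_self_le_one (hσ : σ.PosSemidef) (htr : σ.trace = 1) :
    (σ * σ).trace.re ≤ 1 := by
  rw [hσ.1.trace_mul_self_eq_sum_eigenvalues_sq, ← RCLike.re_to_complex, RCLike.ofReal_re]
  calc ∑ i, hσ.1.eigenvalues i ^ 2 ≤ (∑ i, hσ.1.eigenvalues i) ^ 2 :=
      Finset.sum_sq_le_sq_sum_of_nonneg fun i _ => hσ.eigenvalues_nonneg i
    _ = 1 := by rw [hσ.sum_eigenvalues_eq_one htr, one_pow]

end Entropy

section UniformMixture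

variable {ι n : Type*} [Fintype ι]

noncomputable def uniformMixture (ρ : ι → Matrix n n ℂ) : Matrix n n ℂ :=
  (Fintype.card ι : ℂ)⁻¹ • ∑ s, ρ s

variable {ρ : ι → Matrix n n ℂ}

theorem posSemidef_uniformMixture (hpos : ∀ s, (ρ s).PosSemidef) :
    (uniformMixture ρ).PosSemidef :=
  (posSemidef_sum _ fun s _ => hpos s).smul (by positivity)

theorem trace_uniformMixture [Fintype n] [Nonempty ι] (htr : ∀ s, (ρ s).trace = 1) :
    (uniformMixture ρ).trace = 1 := by
  simp [uniformMixture, trace_sum, htr]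

theorem re_trace_mul_self_uniformMixture_le [Fintype n] [DecidableEq n]
    (hpos : ∀ s, (ρ s).PosSemidef) (htr : ∀ s, (ρ s).trace = 1)
    (horth : ∀ s t, s ≠ t → (ρ s * ρ t).trace = 0) :
    (uniformMixture ρ * uniformMixture ρ).trace.re ≤ (Fintype.card ι : ℝ)⁻¹ := by
  calc (uniformMixture ρ * uniformMixture ρ).trace.re
        = (Fintype.card ι : ℝ)⁻¹ ^ 2 * ∑ s, (ρ s * ρ s).trace.re := by
        simp [uniformMixture, mul_assoc, trace_sum_mul_sum_of_trace_mul_eq_zero ρ horth,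
          Complex.re_sum, sq]
    _ ≤ (Fintype.card ι : ℝ)⁻¹ ^ 2 * ∑ _s : ι, 1 := by
        gcongr with s
        exact (hpos s).re_trace_mul_self_le_one (htr s)
    _ = (Fintype.card ι : ℝ)⁻¹ := by
        simpa [sq] using mul_self_mul_inv (Fintype.card ι : ℝ)⁻¹

end UniformMixture

/-- Entropic core of the one-round QPIR lower bound: if `ρ*` on `A ⊗ T` is an equal
mixture of `d` pairwise orthogonal states, then `log|A| + log|T| ≥ H(ρ*) ≥ log d`. -/
theorem one_round_qpir_entropy_bound {A T : Type*}
    [Fintype A] [Fintype T] [DecidableEq A] [DecidableEq T]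
    {d : ℕ} (hd : 0 < d)
    (ρ : Fin d → Matrix (A × T) (A × T) ℂ)
    (hpos : ∀ s, (ρ s).PosSemidef) (htr : ∀ s, (ρ s).trace = 1)
    (horth : ∀ s t, s ≠ t → (ρ s * ρ t).trace = 0) :
    Real.log (Fintype.card A) + Real.log (Fintype.card T)
        ≥ vNEntropy ((d : ℂ)⁻¹ • ∑ s, ρ s) ∧
      vNEntropy ((d : ℂ)⁻¹ • ∑ s, ρ s) ≥ Real.log d := by
  have : Nonempty (Fin d) := Fin.pos_iff_nonempty.mp hd
  have hmix : (d : ℂ)⁻¹ • ∑ s, ρ s = uniformMixture ρ := by simp [uniformMixture]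
  have hσ := posSemidef_uniformMixture hpos
  have htrσ := trace_uniformMixture htr
  obtain ⟨a, t⟩ : Nonempty (A × T) := by
    by_contra h
    rw [not_nonempty_iff] at h
    simp [trace_eq_zero_of_isEmpty] at htrσ
  have : Nonempty A := ⟨a⟩
  have : Nonempty T := ⟨t⟩
  rw [hmix]
  constructor
  · calc vNEntropy (uniformMixture ρ) ≤ Real.log (Fintype.card (A × T)) :=
          vNEntropy_le_log_card hσ htrσ
      _ = Real.log (Fintype.card A) + Real.log (Fintype.card T) := by
          rw [Fintype.card_prod, Nat.cast_mul, Real.log_mul (by positivity) (by positivity)]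
  · simpa using log_le_vNEntropy_of_re_trace_mul_self_le_inv hσ htrσ
      (re_trace_mul_self_uniformMixture_le hpos htr horth)
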